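/- Let f ∈ ℂ⟦x⟧ have zero constant coefficient, let n ≥ 1, and let g₀ ∈ ℂ⟦x⟧ have constant coefficient 1 with g₀ ≡ exp(f) (mod x^n). Then there exists h ∈ ℂ⟦x⟧ with h ≡ 0 (mod x^n) such that δ(g₀) ≡ g₀ · (δ(f) + δ(h)) (mod x^{2n}). -/

import Mathlib

open PowerSeries

/-- `exp(f)`: substitution of `f` (with nilpotent, i.e. zero, constant coefficient)
into the exponential series `Σ_{n≥0} xⁿ/n!`.  Since the constant coefficient of `f`
vanishes, the coefficient of degree `d` only receives contributions from `f^n` with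
`n ≤ d`, so the following finite sum computes it. -/
noncomputable def expPS (f : PowerSeries ℂ) : PowerSeries ℂ :=
  PowerSeries.mk fun d => ∑ n ∈ Finset.range (d + 1),
    PowerSeries.coeff d (f ^ n) / (n.factorial : ℂ)

/-- The operator `δh = x · h′`, where `h′` is the formal derivative. -/
noncomputable def delta (h : PowerSeries ℂ) : PowerSeries ℂ :=
  PowerSeries.X * h.derivativeFun

/-- `a ≡ b (mod x^N)`: the coefficients of `a` and `b` agree in every degree `< N`. -/
def modX (N : ℕ) (a b : PowerSeries ℂ) : Prop :=
  ∀ i < N, PowerSeries.coeff i a = PowerSeries.coeff i b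

/-- The `k`-th block (of size `m`) of a power series: the polynomial (as a power
series) of degree `< m` whose coefficient of `x^j` is the coefficient of `x^{km+j}`. -/
noncomputable def blk (m k : ℕ) (h : PowerSeries ℂ) : PowerSeries ℂ :=
  PowerSeries.mk fun j => if j < m then PowerSeries.coeff (k * m + j) h else 0

/-!
Since `δ` is a derivation with `δ(exp f) = exp f · δf`, the difference
`δg₀ - g₀ δf = δ(g₀ - exp f) - (g₀ - exp f) δf` is divisible by `xⁿ`. Dividing it by the unit
`g₀` gives a series without constant term, divisible by `xⁿ`, which is `δh` for some `h ≡ 0`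
mod `xⁿ`; then `δg₀ = g₀ (δf + δh)` holds exactly.
-/

lemma coeff_pow_eq_zero_of_lt {R : Type*} [CommSemiring R] {f : R⟦X⟧}
    (hf : constantCoeff f = 0) {m n : ℕ} (h : m < n) : coeff m (f ^ n) = 0 :=
  X_pow_dvd_iff.mp (pow_dvd_pow_of_dvd (X_dvd_iff.mpr hf) n) m h

lemma expPS_eq_subst_exp {f : ℂ⟦X⟧} (hf : constantCoeff f = 0) :
    expPS f = (exp ℂ).subst f := by
  ext d
  rw [coeff_subst' (HasSubst.of_constantCoeff_zero' hf),
    finsum_eq_sum_of_support_subset (s := Finset.range (d + 1))]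
  · simp [expPS, coeff_exp, div_eq_inv_mul]
  · intro k hk
    by_contra hkd
    simp only [Finset.coe_range, Set.mem_Iio, not_lt] at hkd
    simp [coeff_pow_eq_zero_of_lt hf (Nat.lt_of_succ_le hkd)] at hk

lemma derivative_expPS {f : ℂ⟦X⟧} (hf : constantCoeff f = 0) :
    d⁄dX ℂ (expPS f) = expPS f * d⁄dX ℂ f := by
  rw [expPS_eq_subst_exp hf, derivative_subst (HasSubst.of_constantCoeff_zero' hf),
    derivative_exp]

lemma delta_eq (h : ℂ⟦X⟧) : delta h = X * d⁄dX ℂ h := rfl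

lemma delta_sub (a b : ℂ⟦X⟧) : delta (a - b) = delta a - delta b := by
  simp only [delta_eq, map_sub, mul_sub]

lemma delta_expPS {f : ℂ⟦X⟧} (hf : constantCoeff f = 0) :
    delta (expPS f) = expPS f * delta f := by
  rw [delta_eq, delta_eq, derivative_expPS hf, mul_left_comm]

lemma coeff_delta (h : ℂ⟦X⟧) (i : ℕ) : coeff i (delta h) = i * coeff i h := by
  cases i with
  | zero => simp [delta_eq]
  | succ i => rw [delta_eq, coeff_succ_X_mul, coeff_derivative]; push_cast; ring

lemma constantCoeff_delta (h : ℂ⟦X⟧) : constantCoeff (delta h) = 0 := by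
  simp [delta_eq]

lemma X_pow_dvd_delta {N : ℕ} {h : ℂ⟦X⟧} (hN : X ^ N ∣ h) : X ^ N ∣ delta h := by
  rw [X_pow_dvd_iff] at hN ⊢
  intro i hi
  rw [coeff_delta, hN i hi, mul_zero]

lemma modX_iff_X_pow_dvd_sub {N : ℕ} {a b : ℂ⟦X⟧} : modX N a b ↔ X ^ N ∣ a - b := by
  simp only [modX, X_pow_dvd_iff, map_sub, sub_eq_zero]

noncomputable def deltaInv (w : ℂ⟦X⟧) : ℂ⟦X⟧ :=
  mk fun k => coeff k w / k

lemma delta_deltaInv {w : ℂ⟦X⟧} (hw : constantCoeff w = 0) : delta (deltaInv w) = w := by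
  ext i
  rw [coeff_delta, deltaInv, coeff_mk]
  rcases i with _ | i
  · simp [hw]
  · field_simp

lemma X_pow_dvd_deltaInv {N : ℕ} {w : ℂ⟦X⟧} (hN : X ^ N ∣ w) : X ^ N ∣ deltaInv w := by
  rw [X_pow_dvd_iff] at hN ⊢
  intro i hi
  rw [deltaInv, coeff_mk, hN i hi, zero_div]

theorem exists_newton_error_general (f g₀ : PowerSeries ℂ) (n : ℕ)
    (hf : PowerSeries.constantCoeff f = 0)
    (hg₀ : PowerSeries.constantCoeff g₀ = 1)
    (happrox : modX n g₀ (expPS f)) :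
    ∃ h : PowerSeries ℂ, modX n h 0 ∧
      modX (2 * n) (delta g₀) (g₀ * (delta f + delta h)) := by
  have hE : X ^ n ∣ g₀ - expPS f := modX_iff_X_pow_dvd_sub.mp happrox
  have hdiff : X ^ n ∣ delta g₀ - g₀ * delta f := by
    have hsplit : delta g₀ - g₀ * delta f
        = delta (g₀ - expPS f) - (g₀ - expPS f) * delta f := by
      rw [delta_sub, delta_expPS hf]; ring
    rw [hsplit]
    exact dvd_sub (X_pow_dvd_delta hE) (dvd_mul_of_dvd_left hE _)
  set w := (delta g₀ - g₀ * delta f) * g₀⁻¹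
  have hw : constantCoeff w = 0 := by simp [w, constantCoeff_delta]
  have hg₀w : g₀ * (delta f + w) = delta g₀ := by
    have hinv : g₀ * g₀⁻¹ = 1 := PowerSeries.mul_inv_cancel g₀ (by simp [hg₀])
    linear_combination (delta g₀ - g₀ * delta f) * hinv
  refine ⟨deltaInv w, ?_, ?_⟩
  · rw [modX_iff_X_pow_dvd_sub, sub_zero]
    exact X_pow_dvd_deltaInv (dvd_mul_of_dvd_left hdiff _)
  · rw [delta_deltaInv hw, hg₀w]
    exact fun _ _ => rfl

/-- If `f` has zero constant coefficient, `n ≥ 1`, and `g₀` has constant coefficient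
`1` with `g₀ ≡ exp(f) (mod x^n)`, then there exists `h ≡ 0 (mod x^n)` with
`δ(g₀) ≡ g₀ · (δ(f) + δ(h)) (mod x^{2n})`. -/
theorem exists_newton_error (f g₀ : PowerSeries ℂ) (n : ℕ)
    (hf : PowerSeries.constantCoeff f = 0) (hn : 1 ≤ n)
    (hg₀ : PowerSeries.constantCoeff g₀ = 1)
    (happrox : modX n g₀ (expPS f)) :
    ∃ h : PowerSeries ℂ, modX n h 0 ∧
      modX (2 * n) (delta g₀) (g₀ * (delta f + delta h)) :=
  exists_newton_error_general f g₀ n hf hg₀ happrox
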